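/- Let k ≥ 1, let C = y_1+⋯+y_m be an auxiliary alphabet of independent variables, work in variables x_1,…,x_k, and define F_j(t^r, X_k) = S_j[C+X_k] − t^r·S_j[C+tX_k]. Then for any integers j_1,…,j_k: det( F_{j_i + l}(t^{k−l}, X_k) )_{1≤i,l≤k} = x_1 x_2 ⋯ x_k · det( F_{j_i + l − 1}(t^{k−l+1}, X_k) )_{1≤i,l≤k}. -/

import Mathlib

open MvPolynomial Finset

set_option synthInstance.maxHeartbeats 1000000
set_option maxHeartbeats 1000000

noncomputable section

/-- The base field `ℚ(q,t)`. -/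
abbrev Fqt : Type := FractionRing (MvPolynomial (Fin 2) ℚ)

/-- The element `q` of `ℚ(q,t)`. -/
def qF : Fqt := algebraMap (MvPolynomial (Fin 2) ℚ) Fqt (X 0)

/-- The element `t` of `ℚ(q,t)`. -/
def tF : Fqt := algebraMap (MvPolynomial (Fin 2) ℚ) Fqt (X 1)

lemma qF_ne_zero : qF ≠ 0 := by
  have h : Function.Injective (algebraMap (MvPolynomial (Fin 2) ℚ) Fqt) :=
    IsFractionRing.injective _ _
  intro hq
  exact MvPolynomial.X_ne_zero (R := ℚ) (0 : Fin 2) (h (by rw [map_zero]; exact hq))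

/-- Polynomials in `N` variables `x_1, …, x_N` over `ℚ(q,t)`. -/
abbrev Rg (N : ℕ) := MvPolynomial (Fin N) Fqt

/-- The field of rational functions in `x_1, …, x_N` over `ℚ(q,t)`. -/
abbrev Kg (N : ℕ) := FractionRing (Rg N)

/-- The variable `x_i` (1-based indexing), as an element of `Kg N`. -/
def xv (N i : ℕ) : Kg N :=
  if h : 1 ≤ i ∧ i ≤ N then algebraMap (Rg N) (Kg N) (X ⟨i - 1, by omega⟩) else 0

/-- A scalar from `ℚ(q,t)` viewed inside `Kg N`. -/
def cK (N : ℕ) (c : Fqt) : Kg N := algebraMap (Rg N) (Kg N) (C c)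

/-- The element `q` of `Kg N`. -/
def qK (N : ℕ) : Kg N := cK N qF

/-- The element `t` of `Kg N`. -/
def tK (N : ℕ) : Kg N := cK N tF

/-- The field automorphism of `Kg N` exchanging two variables. -/
def swapK (N : ℕ) (a b : Fin N) : Kg N ≃+* Kg N :=
  IsFractionRing.ringEquivOfRingEquiv
    (AlgEquiv.toRingEquiv (renameEquiv Fqt (Equiv.swap a b)))

/-- `swapv N a b` exchanges the variables `x_a` and `x_b` (1-based). -/
def swapv (N a b : ℕ) (f : Kg N) : Kg N :=
  if h : 1 ≤ a ∧ a ≤ N ∧ 1 ≤ b ∧ b ≤ N then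
    swapK N ⟨a - 1, by omega⟩ ⟨b - 1, by omega⟩ f else f

/-- The divided difference `∂_i` (1-based): `∂_i f = (f - σ_i f)/(x_i - x_{i+1})`. -/
def dd (N i : ℕ) (f : Kg N) : Kg N :=
  if 1 ≤ i ∧ i + 1 ≤ N then (f - swapv N i (i + 1) f) / (xv N i - xv N (i + 1)) else 0

/-- The algebra endomorphism of `Rg N` scaling the variable `l` by the scalar `c`. -/
def scaleHom (N : ℕ) (l : Fin N) (c : Fqt) : Rg N →ₐ[Fqt] Rg N :=
  aeval (fun i => if i = l then C c * X i else X i)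

lemma scaleHom_comp (N : ℕ) (l : Fin N) (c : Fqt) (hc : c ≠ 0) :
    (scaleHom N l c).comp (scaleHom N l c⁻¹) = AlgHom.id Fqt (Rg N) := by
  apply algHom_ext
  intro i
  by_cases h : i = l
  · subst h
    simp only [scaleHom, AlgHom.coe_comp, Function.comp_apply, aeval_X, if_pos,
      AlgHom.coe_id, id_eq, map_mul, aeval_C, algebraMap_eq, if_true]
    rw [← mul_assoc, ← C_mul, inv_mul_cancel₀ hc, C_1, one_mul]
  · simp [scaleHom, h]

/-- The algebra automorphism of `Rg N` scaling the variable `l` by a nonzero scalar `c`. -/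
def scaleEquiv (N : ℕ) (l : Fin N) (c : Fqt) (hc : c ≠ 0) : Rg N ≃ₐ[Fqt] Rg N :=
  AlgEquiv.ofAlgHom (scaleHom N l c) (scaleHom N l c⁻¹)
    (scaleHom_comp N l c hc)
    (by simpa [inv_inv] using scaleHom_comp N l c⁻¹ (inv_ne_zero hc))

/-- The field automorphism `Θ_l` of `Kg N`, substituting `x_l ↦ q·x_l`. -/
def thetaK (N : ℕ) (l : Fin N) : Kg N ≃+* Kg N :=
  IsFractionRing.ringEquivOfRingEquiv
    (AlgEquiv.toRingEquiv (scaleEquiv N l qF qF_ne_zero))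

/-- `Θ_l` with 1-based indexing: substitutes `x_l ↦ q x_l`. -/
def thetav (N l : ℕ) (f : Kg N) : Kg N :=
  if h : 1 ≤ l ∧ l ≤ N then thetaK N ⟨l - 1, by omega⟩ f else f

/-- The list (alphabet) `x_a, x_{a+1}, …, x_b`. -/
def XL (N a b : ℕ) : List (Kg N) := (List.range' a (b + 1 - a)).map (xv N)

/-- Scaling an alphabet by a constant. -/
def scaleL {A : Type*} [Mul A] (c : A) (L : List A) : List A := L.map (c * ·)

/-- Complete homogeneous function `h_j` of a (listed) alphabet. -/
def hfun {A : Type*} [CommRing A] : List A → ℕ → A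
  | _, 0 => 1
  | [], _ + 1 => 0
  | a :: l, j + 1 => hfun l (j + 1) + a * hfun (a :: l) j
  termination_by l j => (l.length, j)

/-- Elementary symmetric function `e_j` of a (listed) alphabet. -/
def efun {A : Type*} [CommRing A] : List A → ℕ → A
  | _, 0 => 1
  | [], _ + 1 => 0
  | a :: l, j + 1 => efun l (j + 1) + a * efun l j

/-- `S_j[P − M]`, the complete function of degree `j ∈ ℤ` of the difference of
two alphabets: `S_j[P−M] = Σ_{a+b=j} h_a[P]·(−1)^b e_b[M]`, and `0` for `j < 0`. -/
def SJ {A : Type*} [CommRing A] (P M : List A) (j : ℤ) : A :=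
  if 0 ≤ j then
    ∑ p ∈ Finset.range (j.toNat + 1), hfun P (j.toNat - p) * (-1 : A) ^ p * efun M p
  else 0

/-- `e_m[L]` with integer index (`0` for `m < 0`). -/
def EJ {A : Type*} [CommRing A] (L : List A) (m : ℤ) : A :=
  if 0 ≤ m then efun L m.toNat else 0

/-- The Jacobi–Trudi determinant: the Schur function `S_λ[P−M]` for a partition
given as a vector `lam : Fin n → ℕ`. -/
def schurJT {A : Type*} [CommRing A] (n : ℕ) (lam : Fin n → ℕ) (P M : List A) : A :=
  (Matrix.of fun i j : Fin n => SJ P M ((lam i : ℤ) - (i : ℕ) + (j : ℕ))).det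

/-- Skew Schur function `S_{α/η}[P−M]` for integer vectors `α, η` of length `k`. -/
def schurVec {A : Type*} [CommRing A] (k : ℕ) (α η : Fin k → ℤ) (P M : List A) : A :=
  (Matrix.of fun i j : Fin k => SJ P M (α i - (i : ℕ) + (j : ℕ) - η j)).det

/-- Power sum `p_i = x_1^i + ⋯ + x_N^i`. -/
def pK (N i : ℕ) : Kg N := ∑ l ∈ Finset.Icc 1 N, xv N l ^ i

/-- The modified complete functions `g_j = S_j[X(t−1)/(q−1)]`, defined through the
recurrence `j·g_j = Σ_{i=1}^{j} ((t^i−1)/(q^i−1)) p_i g_{j−i}`, `g_0 = 1`. -/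
def gK (N : ℕ) : ℕ → Kg N
  | 0 => 1
  | j + 1 =>
    ((j : Kg N) + 1)⁻¹ *
      ∑ i ∈ (Finset.Icc 1 (j + 1)).attach,
        ((tK N ^ (i : ℕ) - 1) / (qK N ^ (i : ℕ) - 1)) * pK N (i : ℕ) * gK N (j + 1 - (i : ℕ))
  termination_by j => j
  decreasing_by
    have := Finset.mem_Icc.mp i.2
    omega

/-- `g_m` with integer index (`0` for `m < 0`). -/
def gz (N : ℕ) (m : ℤ) : Kg N := if 0 ≤ m then gK N m.toNat else 0

/-- The modified Schur function `S_λ[X^{tq}]` as a `k×k` Jacobi–Trudi determinant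
in the `g_j`'s, for a partition `lam` with at most `k` parts. -/
def schurG (N k : ℕ) (lam : Fin k → ℕ) : Kg N :=
  (Matrix.of fun i j : Fin k => gz N ((lam i : ℤ) - (i : ℕ) + (j : ℕ))).det

/-- `∂_b ∘ ⋯ ∘ ∂_{a+1} ∘ ∂_a` (i.e. `∂_a` applied first). -/
def ddUp (N a b : ℕ) (f : Kg N) : Kg N :=
  (List.range' a (b + 1 - a)).foldl (fun g i => dd N i g) f

/-- `∂_a ∘ ∂_{a+1} ∘ ⋯ ∘ ∂_b` (i.e. `∂_b` applied first). -/
def ddDown (N a b : ℕ) (f : Kg N) : Kg N :=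
  (List.range' a (b + 1 - a)).reverse.foldl (fun g i => dd N i g) f

/-- `∂_{(k|n−k)} = (∂_{n−k}⋯∂_1)(∂_{n−k+1}⋯∂_2)⋯(∂_{n−1}⋯∂_k)`. -/
def ddSyl (N n k : ℕ) (f : Kg N) : Kg N :=
  (List.range k).foldl (fun g j => ddUp N (k - j) (n - 1 - j) g) f

/-- `∂_{ω(k)} = (∂_{k−1})(∂_{k−2}∂_{k−1})⋯(∂_1⋯∂_{k−1})`, the divided difference
of the longest permutation of `S_k`. -/
def ddOmega (N k : ℕ) (f : Kg N) : Kg N :=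
  (List.range (k - 1)).foldl (fun g j => ddDown N (j + 1) (k - 1) g) f

/-- The resultant `R(P,Q) = Π_{a∈P, b∈Q} (a−b)` of two (listed) alphabets. -/
def resL {A : Type*} [CommRing A] (P Q : List A) : A :=
  (P.map (fun a => (Q.map (fun b => a - b)).prod)).prod

/-- `χ^{(k)}_{(1|n−k)} f = ∂_{n−1}⋯∂_k ( R(x_k, X_k^c/t) · f )`. -/
def chi1 (N n k : ℕ) (f : Kg N) : Kg N :=
  ddUp N k (n - 1) (resL [xv N k] (scaleL (tK N)⁻¹ (XL N (k + 1) n)) * f)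

/-- `χ_{(k|n−k)} f = ∂_{(k|n−k)} ( R(X_k, X_k^c/t) · f )`. -/
def chiSyl (N n k : ℕ) (f : Kg N) : Kg N :=
  ddSyl N n k (resL (XL N 1 k) (scaleL (tK N)⁻¹ (XL N (k + 1) n)) * f)

/-- `χ_{ω(k)} f = ∂_{ω(k)} ( Π_{1≤i<j≤k} (x_i − x_j/t) · f )`. -/
def chiOmega (N k : ℕ) (f : Kg N) : Kg N :=
  ddOmega N k
    ((∏ i ∈ Finset.Icc 1 k, ∏ j ∈ Finset.Ioc i k, (xv N i - (tK N)⁻¹ * xv N j)) * f)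

/-- `Θ_{i_k}⋯Θ_{i_1}` for a set `I = {i_1 < ⋯ < i_k}` (smallest index applied first). -/
def thetaSet (N : ℕ) (I : Finset ℕ) (f : Kg N) : Kg N :=
  (I.sort (· ≤ ·)).foldl (fun g l => thetav N l g) f

/-- The Macdonald operator `M_l` in the variables `{x_i : i ∈ I}`:
`M_l^{(I)} = t^{l(l−1)/2} Σ_{J⊆I, |J|=l} R(tX_J, X_I∖X_J) Θ_J`. -/
def MacOp (N : ℕ) (I : Finset ℕ) (l : ℕ) (f : Kg N) : Kg N :=
  tK N ^ (l * (l - 1) / 2) *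
    ∑ J ∈ I.powersetCard l,
      (∏ a ∈ J, ∏ b ∈ I \ J, (tK N * xv N a - xv N b)) * thetaSet N J f

/-- The creation operator
`B_k^{(n)} = Σ_{|I|=k} Σ_{l=0}^{k} (−t)^l x^I (R(X_I,X_I^c/t)/R(X_I,X_I^c)) M_l^{(I)}`. -/
def BOp (N n k : ℕ) (f : Kg N) : Kg N :=
  ∑ I ∈ (Finset.Icc 1 n).powersetCard k, ∑ l ∈ Finset.range (k + 1),
    (-(tK N)) ^ l * (∏ i ∈ I, xv N i) *
      ((∏ a ∈ I, ∏ b ∈ Finset.Icc 1 n \ I, (xv N a - (tK N)⁻¹ * xv N b)) /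
        (∏ a ∈ I, ∏ b ∈ Finset.Icc 1 n \ I, (xv N a - xv N b))) *
      MacOp N I l f

/-- `ε(μ,α)`: the sign of the unique permutation `σ` with
`α_i = μ_{σ(i)} − σ(i) + i` for all `i`, and `0` if no such `σ` exists. -/
def eps (n : ℕ) (μ α : Fin n → ℕ) : ℤ :=
  if h : ∃ σ : Equiv.Perm (Fin n),
      ∀ i, (α i : ℤ) = (μ (σ i) : ℤ) - ((σ i : ℕ) : ℤ) + (i : ℕ) then
    Equiv.Perm.sign h.choose
  else 0

/-- `[|α|] = q^{α_1} t^{n−1} + q^{α_2} t^{n−2} + ⋯ + q^{α_n}`. -/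
def anorm (N n : ℕ) (α : Fin n → ℕ) : Kg N :=
  ∑ i : Fin n, qK N ^ (α i) * tK N ^ (n - 1 - (i : ℕ))

/-- `[|α|]_{t,q}`, i.e. `anorm` with `q` and `t` interchanged. -/
def anormT (N n : ℕ) (α : Fin n → ℕ) : Kg N :=
  ∑ i : Fin n, tK N ^ (α i) * qK N ^ (n - 1 - (i : ℕ))

/-- The finite set of all distinct rearrangements of a vector `ν ∈ ℕ^n`. -/
def permsOf (n : ℕ) (ν : Fin n → ℕ) : Finset (Fin n → ℕ) :=
  Finset.image (fun σ : Equiv.Perm (Fin n) => ν ∘ σ) Finset.univ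

/-- `[λ]_{μν}(q,t) = Σ_α ε(μ,α)·([|λ|] − [|α|])`, `α` ranging over distinct
rearrangements of `ν`. -/
def brackQT (N n : ℕ) (lam μ ν : Fin n → ℕ) : Kg N :=
  ∑ α ∈ permsOf n ν, (eps n μ α : Kg N) * (anorm N n lam - anorm N n α)

/-- `[λ]_{μν}(t,q)`: the same with `q` and `t` interchanged. -/
def brackTQ (N n : ℕ) (lam μ ν : Fin n → ℕ) : Kg N :=
  ∑ α ∈ permsOf n ν, (eps n μ α : Kg N) * (anormT N n lam - anormT N n α)

/-- The conjugate of a partition, as a vector of prescribed length `b`. -/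
def conjTo (a b : ℕ) (lam : Fin a → ℕ) : Fin b → ℕ :=
  fun j => (Finset.univ.filter (fun i : Fin a => (j : ℕ) + 1 ≤ lam i)).card

/-- Dominance order: `dominatedBy n a b` means `a ≤ b`, i.e.
`a_1 + ⋯ + a_i ≤ b_1 + ⋯ + b_i` for all `i`. -/
def dominatedBy (n : ℕ) (a b : Fin n → ℕ) : Prop :=
  ∀ p : Fin n, ∑ i ∈ Finset.Iic p, a i ≤ ∑ i ∈ Finset.Iic p, b i

/-- The Schur polynomial `S_μ[X_n]` inside `Kg N` (Jacobi–Trudi determinant in the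
complete functions of `x_1, …, x_n`). -/
def schurX (N n : ℕ) (μ : Fin n → ℕ) : Kg N := schurJT n μ (XL N 1 n) []

/-- The monomial symmetric polynomial `m_μ[X_n]` inside `Kg N`. -/
def msym (N n : ℕ) (μ : Fin n → ℕ) : Kg N :=
  ∑ α ∈ permsOf n μ, ∏ i : Fin n, xv N ((i : ℕ) + 1) ^ α i

/-- `t`-factorial `k_t! = t^{−k(k−1)/2} (t)_k/(1−t)^k`. -/
def ktfact (N k : ℕ) : Kg N :=
  tK N ^ (-((k * (k - 1) / 2 : ℕ) : ℤ)) *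
    (∏ i ∈ Finset.Icc 1 k, (1 - tK N ^ i)) / (1 - tK N) ^ k

/-- `Ω_k = σ_1 σ_2 ⋯ σ_{k−1} Θ_k`. -/
def omegaOp (N k : ℕ) (f : Kg N) : Kg N :=
  (List.range (k - 1)).foldl (fun g j => swapv N (k - 1 - j) (k - j) g) (thetav N k f)

/-- `(1−tΩ_k)(1−t²Ω_k)⋯(1−t^kΩ_k)`, composed in the order written
(the factor `(1−t^kΩ_k)` applied first). -/
def creationProd (N k : ℕ) (f : Kg N) : Kg N :=
  (List.range k).foldl (fun g j => g - tK N ^ (k - j) * omegaOp N k g) f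

/-- The exponent vector `(0,…,0,α_1,…,α_n) ∈ ℕ^{2n}` read at (1-based) position `i`. -/
def abar (n : ℕ) (α : Fin n → ℕ) (i : ℕ) : ℕ :=
  if h : n + 1 ≤ i ∧ i ≤ 2 * n then α ⟨i - n - 1, by omega⟩ else 0

/-- `x̄^{ρ−(0,…,0,α_1,…,α_n)} = Π_{i=1}^{2n} (−x_i)^{(i−1) − (0,…,0,α)_i}`. -/
def xbar (n : ℕ) (α : Fin n → ℕ) : Kg (2 * n) :=
  ∏ i ∈ Finset.Icc 1 (2 * n), (-(xv (2 * n) i)) ^ (i - 1 - abar n α i)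

/-- `⟨f⟩_{κν} = Σ_α ∂_ω( x̄^{ρ−(0,…,0,α)} f )·([|κ|]_{t,q} − [|α|]_{t,q})`,
`α` over distinct rearrangements of `ν`. -/
def brackF (n : ℕ) (f : Kg (2 * n)) (κ ν : Fin n → ℕ) : Kg (2 * n) :=
  ∑ α ∈ permsOf n ν,
    ddOmega (2 * n) (2 * n) (xbar n α * f) * (anormT (2 * n) n κ - anormT (2 * n) n α)

/-- The creation operator in `k` variables, `B_k^{(k)} = Σ_{l=0}^k (−t)^l x_1⋯x_k M_l^{(k)}`. -/
def BOpSelf (N k : ℕ) (f : Kg N) : Kg N :=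
  ∑ l ∈ Finset.range (k + 1),
    (-(tK N)) ^ l * (∏ i ∈ Finset.Icc 1 k, xv N i) * MacOp N (Finset.Icc 1 k) l f


/-!
Write `c_r` for the column `(F_{j_i+n-r}(t^r, X))_i`, where `n = |X|`. Since
`Σ_r (-1)^r e_r[X] S_{j-r}[C + X] = S_j[C]` and `e_r[tX] = t^r e_r[X]`, these columns satisfy
`Σ_{r=0}^{n} (-1)^r e_r[X] c_r = 0`. The left matrix has columns `c_{n-1}, …, c_0` and the
right one `c_n, …, c_1`. Eliminating `c_0` with the relation leaves `-(-1)^n e_n[X] c_n`, and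
rotating `c_n` to the front costs `(-1)^(n-1)`; the signs cancel and `e_n[X] = x_1 ⋯ x_n`.
-/

theorem Matrix.det_reverse_eq_of_sum_smul_eq_zero {R : Type*} [CommRing R] {n : ℕ}
    (u : ℕ → Fin n → R) (a : ℕ → R) (h : ∑ r ∈ range (n + 1), a r • u r = 0) :
    a 0 * (Matrix.of fun i l : Fin n => u (n - 1 - l) i).det
      = (-1) ^ n * a n * (Matrix.of fun i l : Fin n => u (n - l) i).det := by
  rcases n with _ | K
  · simp
  set M := Matrix.of fun i l : Fin (K + 1) => u (K + 1 - 1 - l) i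
  set N := Matrix.of fun i l : Fin (K + 1) => u (K + 1 - l) i
  have hrel : (fun i => ∑ l : Fin (K + 1), a (K + 1 - l) • N i l) = (-a 0) • u 0 := by
    rw [sum_range_succ', add_eq_zero_iff_eq_neg, ← sum_range_reflect] at h
    funext i
    rw [neg_smul, ← h]
    simp only [N, Matrix.of_apply, Finset.sum_apply, Pi.smul_apply]
    rw [Fin.sum_univ_eq_sum_range (fun l => a (K + 1 - l) • u (K + 1 - l) i)]
    refine sum_congr rfl fun l hl => ?_
    rw [show K + 1 - l = K + 1 - 1 - l + 1 by grind]
  have hupdate : -a 0 * (N.updateCol 0 (u 0)).det = a (K + 1) * N.det := by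
    rw [← Matrix.det_updateCol_smul, ← hrel]
    simpa using Matrix.det_updateCol_sum N 0 (fun l => a (K + 1 - l))
  have hrotate : (N.updateCol 0 (u 0)).submatrix id (finRotate (K + 1)) = M := by
    ext i l
    induction l using Fin.lastCases with
    | last => simp [M]
    | cast l =>
      have hl : finRotate (K + 1) l.castSucc = l.succ := by ext; simp
      simp [M, N, hl]
  have hsign : M.det = (-1) ^ K * (N.updateCol 0 (u 0)).det := by
    rw [← hrotate, Matrix.det_permute', sign_finRotate]
    simp
  rw [hsign]
  linear_combination -(-1) ^ K * hupdate

section CompleteHomogeneous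

variable {A : Type*} [CommRing A]

@[simp] lemma hfun_zero (L : List A) : hfun L 0 = 1 := by cases L <;> rw [hfun]

lemma hfun_cons_succ (a : A) (L : List A) (n : ℕ) :
    hfun (a :: L) (n + 1) = hfun L (n + 1) + a * hfun (a :: L) n := by
  rw [hfun]

@[simp] lemma efun_zero (L : List A) : efun L 0 = 1 := by cases L <;> rw [efun]

@[simp] lemma efun_nil_succ (n : ℕ) : efun ([] : List A) (n + 1) = 0 := by rw [efun]

lemma efun_cons_succ (a : A) (L : List A) (n : ℕ) :
    efun (a :: L) (n + 1) = efun L (n + 1) + a * efun L n := by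
  rw [efun]

lemma efun_append_singleton_succ (a : A) (L : List A) (n : ℕ) :
    efun (L ++ [a]) (n + 1) = efun L (n + 1) + a * efun L n := by
  induction L generalizing n with
  | nil => simp [efun_cons_succ]
  | cons b L ih =>
    cases n with
    | zero => simp only [List.cons_append, efun_cons_succ, ih, efun_zero]; ring
    | succ n => simp only [List.cons_append, efun_cons_succ, ih]; ring

lemma efun_eq_zero_of_length_lt {L : List A} {n : ℕ} (h : L.length < n) : efun L n = 0 := by
  induction L generalizing n with
  | nil => obtain ⟨n, rfl⟩ := Nat.exists_eq_add_one.mpr h; simp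
  | cons b L ih =>
    obtain ⟨n, rfl⟩ := Nat.exists_eq_add_one.mpr (Nat.zero_lt_of_lt h)
    simp only [List.length_cons] at h
    rw [efun_cons_succ, ih (by omega), ih (by omega), mul_zero, add_zero]

lemma efun_length (L : List A) : efun L L.length = L.prod := by
  induction L with
  | nil => simp
  | cons b L ih =>
    rw [List.length_cons, efun_cons_succ, ih, efun_eq_zero_of_length_lt (by simp), zero_add,
      List.prod_cons]

lemma efun_scaleL (c : A) (L : List A) (n : ℕ) : efun (scaleL c L) n = c ^ n * efun L n := by
  induction L generalizing n with
  | nil => cases n <;> simp [scaleL]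
  | cons b L ih =>
    cases n with
    | zero => simp
    | succ n =>
      simp only [scaleL, List.map_cons] at ih ⊢
      rw [efun_cons_succ, efun_cons_succ, ih, ih]
      ring

lemma SJ_nil_of_neg (L : List A) {j : ℤ} (hj : j < 0) : SJ L [] j = 0 := by
  simp [SJ, hj.not_ge]

@[simp] lemma SJ_nil_natCast (L : List A) (n : ℕ) : SJ L [] n = hfun L n := by
  simp [SJ, sum_range_succ']

@[simp] lemma SJ_nil_zero (L : List A) : SJ L [] 0 = 1 := by
  simpa using SJ_nil_natCast L 0

lemma SJ_nil_cons (a : A) (L : List A) (j : ℤ) :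
    SJ (a :: L) [] j = SJ L [] j + a * SJ (a :: L) [] (j - 1) := by
  rcases lt_or_ge j 0 with hj | hj
  · simp [SJ_nil_of_neg, hj, show j - 1 < 0 by omega]
  lift j to ℕ using hj
  cases j with
  | zero => simp [SJ_nil_of_neg]
  | succ n =>
    rw [Nat.cast_succ, add_sub_cancel_right, ← Nat.cast_succ]
    simp only [SJ_nil_natCast]
    exact hfun_cons_succ a L n

lemma SJ_nil_append_singleton (a : A) (L : List A) (j : ℤ) :
    SJ (L ++ [a]) [] j = SJ L [] j + a * SJ (L ++ [a]) [] (j - 1) := by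
  induction L generalizing j with
  | nil => simpa using SJ_nil_cons a [] j
  | cons b L ihL =>
    induction j using Int.induction_on with
    | zero => simp [SJ_nil_of_neg]
    | succ n ihj =>
      have h1 := SJ_nil_cons b (L ++ [a]) (n + 1)
      have h2 := SJ_nil_cons b (L ++ [a]) n
      have h3 := SJ_nil_cons b L (n + 1)
      have h4 := ihL (n + 1)
      simp only [add_sub_cancel_right, List.cons_append] at h1 h2 h3 h4 ihj ⊢
      linear_combination h1 - h3 + h4 - a * h2 + b * ihj
    | pred n _ => simp [SJ_nil_of_neg, show -(n : ℤ) - 1 < 0 by omega]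

lemma sum_efun_mul_SJ_append (X C : List A) (j : ℤ) :
    ∑ r ∈ range (X.length + 1), (-1) ^ r * efun X r * SJ (C ++ X) [] (j - r) = SJ C [] j := by
  induction X using List.reverseRecOn generalizing j with
  | nil => simp
  | append_singleton X a ih =>
    set P := C ++ X ++ [a]
    have hsplit : ∑ r ∈ range (X.length + 1),
          (-1) ^ (r + 1) * efun (X ++ [a]) (r + 1) * SJ P [] (j - (r + 1 : ℕ))
        = ∑ r ∈ range (X.length + 1),
            (-1) ^ (r + 1) * efun X (r + 1) * SJ P [] (j - (r + 1 : ℕ))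
          - a * ∑ r ∈ range (X.length + 1), (-1) ^ r * efun X r * SJ P [] (j - r - 1) := by
      rw [mul_sum, ← sum_sub_distrib]
      refine sum_congr rfl fun r _ => ?_
      rw [efun_append_singleton_succ, Nat.cast_succ, ← sub_sub]
      ring
    have hshift : ∑ r ∈ range (X.length + 1),
          (-1) ^ (r + 1) * efun X (r + 1) * SJ P [] (j - (r + 1 : ℕ)) + SJ P [] j
        = ∑ r ∈ range (X.length + 1), (-1) ^ r * efun X r * SJ P [] (j - r) := by
      rw [sum_range_succ _ X.length, efun_eq_zero_of_length_lt (Nat.lt_succ_self _),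
        mul_zero, zero_mul, add_zero]
      simpa using (sum_range_succ' (fun r => (-1) ^ r * efun X r * SJ P [] (j - r)) _).symm
    have hrec : ∑ r ∈ range (X.length + 1), (-1) ^ r * efun X r * SJ P [] (j - r)
        - a * ∑ r ∈ range (X.length + 1), (-1) ^ r * efun X r * SJ P [] (j - r - 1)
        = SJ C [] j := by
      rw [← ih j, mul_sum, ← sum_sub_distrib]
      refine sum_congr rfl fun r _ => ?_
      rw [SJ_nil_append_singleton a (C ++ X) (j - r)]
      ring
    rw [List.length_append, List.length_singleton, ← List.append_assoc, sum_range_succ', hsplit]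
    simp only [pow_zero, efun_zero, Nat.cast_zero, sub_zero, one_mul]
    linear_combination hshift + hrec

/-- `completeDiff C X t r j` is the paper's `F_j(t^r, X) = S_j[C + X] - t^r S_j[C + tX]`. -/
def completeDiff (C X : List A) (t : A) (r : ℕ) (j : ℤ) : A :=
  SJ (C ++ X) [] j - t ^ r * SJ (C ++ scaleL t X) [] j

lemma sum_efun_mul_completeDiff (C X : List A) (t : A) (j : ℤ) :
    ∑ r ∈ range (X.length + 1), (-1) ^ r * efun X r * completeDiff C X t r (j - r) = 0 := by
  have hscaled := sum_efun_mul_SJ_append (scaleL t X) C j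
  rw [scaleL, List.length_map, ← scaleL] at hscaled
  rw [← sub_self (SJ C [] j)]
  nth_rewrite 1 [← sum_efun_mul_SJ_append X C j]
  rw [← hscaled, ← sum_sub_distrib]
  refine sum_congr rfl fun r _ => ?_
  rw [completeDiff, efun_scaleL]
  ring

theorem det_completeDiff_shift {n : ℕ} (C X : List A) (t : A) (hX : X.length = n)
    (js : Fin n → ℤ) :
    (Matrix.of fun i l : Fin n => completeDiff C X t (n - 1 - l) (js i + (l : ℕ) + 1)).det
      = X.prod *
        (Matrix.of fun i l : Fin n => completeDiff C X t (n - l) (js i + (l : ℕ))).det := by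
  subst hX
  set u : ℕ → Fin X.length → A := fun r i => completeDiff C X t r (js i + X.length - r)
  have hrel : ∑ r ∈ range (X.length + 1), ((-1) ^ r * efun X r) • u r = 0 := by
    funext i
    simpa [u] using sum_efun_mul_completeDiff C X t (js i + X.length)
  have h := Matrix.det_reverse_eq_of_sum_smul_eq_zero u _ hrel
  rw [pow_zero, efun_zero, one_mul, one_mul, efun_length, ← mul_assoc, ← mul_pow, neg_mul_neg,
    one_mul, one_pow, one_mul] at h
  convert h using 3 <;> ext i l <;> simp only [u, Matrix.of_apply] <;> congr 1 <;> omega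

end CompleteHomogeneous

lemma XL_length (N a b : ℕ) : (XL N a b).length = b + 1 - a := by
  simp [XL]

lemma XL_prod (N a b : ℕ) : (XL N a b).prod = ∏ i ∈ Icc a b, xv N i := by
  simp [XL, Finset.prod, Nat.Icc_eq_range']

theorem stmt16_general (k m : ℕ) (js : Fin k → ℤ) :
    (Matrix.of fun i l : Fin k =>
        SJ (XL (k + m) (k + 1) (k + m) ++ XL (k + m) 1 k) [] (js i + (l : ℕ) + 1)
          - tK (k + m) ^ (k - 1 - (l : ℕ)) *
            SJ (XL (k + m) (k + 1) (k + m) ++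
                scaleL (tK (k + m)) (XL (k + m) 1 k)) [] (js i + (l : ℕ) + 1)).det
      = (∏ i ∈ Finset.Icc 1 k, xv (k + m) i) *
          (Matrix.of fun i l : Fin k =>
            SJ (XL (k + m) (k + 1) (k + m) ++ XL (k + m) 1 k) [] (js i + (l : ℕ))
              - tK (k + m) ^ (k - (l : ℕ)) *
                SJ (XL (k + m) (k + 1) (k + m) ++
                    scaleL (tK (k + m)) (XL (k + m) 1 k)) [] (js i + (l : ℕ))).det := by
  rw [← XL_prod]
  exact det_completeDiff_shift _ _ _ (by rw [XL_length]; omega) js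

/-- Lemma 4.5: with
`F_j(t^r,X_k) = S_j[C+X_k] − t^r S_j[C+tX_k]` and `C = x_{k+1},…,x_{k+m}`,
`det(F_{j_i+l}(t^{k−l},X_k)) = x_1⋯x_k · det(F_{j_i+l−1}(t^{k−l+1},X_k))`. -/
theorem stmt16 (k m : ℕ) (hk1 : 1 ≤ k) (js : Fin k → ℤ) :
    (Matrix.of fun i l : Fin k =>
        SJ (XL (k + m) (k + 1) (k + m) ++ XL (k + m) 1 k) [] (js i + (l : ℕ) + 1)
          - tK (k + m) ^ (k - 1 - (l : ℕ)) *
            SJ (XL (k + m) (k + 1) (k + m) ++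
                scaleL (tK (k + m)) (XL (k + m) 1 k)) [] (js i + (l : ℕ) + 1)).det
      = (∏ i ∈ Finset.Icc 1 k, xv (k + m) i) *
          (Matrix.of fun i l : Fin k =>
            SJ (XL (k + m) (k + 1) (k + m) ++ XL (k + m) 1 k) [] (js i + (l : ℕ))
              - tK (k + m) ^ (k - (l : ℕ)) *
                SJ (XL (k + m) (k + 1) (k + m) ++
                    scaleL (tK (k + m)) (XL (k + m) 1 k)) [] (js i + (l : ℕ))).det :=
  stmt16_general k m js
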